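/- Let μ be a Borel probability measure on E, let z ∈ E, and let w ∈ L¹(E,μ) be an integration-by-parts weight for (μ,z). Assume: (i) the pushforward measure μ∘g⁻¹ is absolutely continuous with respect to Lebesgue measure on ℝ; (ii) for μ-almost every x ∈ E the minimum of x over [0,1] is attained at a unique point, and τ : E → [0,1] is a measurable map with x(τ(x)) = g(x) for μ-a.e. x; (iii) for every φ ∈ C¹_b(E), every ε > 0 and every r ∈ ℝ with r + ε < 0: (1/(2ε)) ∫_{{x : r−ε ≤ g(x) ≤ r+ε}} z(τ(x)) φ(x) μ(dx) = − ∫_E θ_{r,ε}(g(x)) ( Dφ(x)(z) − w(x) φ(x) ) μ(dx). Then for every φ ∈ C¹_b(E) the function G : (−∞,0) → ℝ defined by G(r) = − ∫_{{x : g(x) ≥ r}} ( Dφ(x)(z) − w(x) φ(x) ) μ(dx) is continuous, and for every Borel set A ⊆ (−∞,0): ∫_E 1_A(g(x)) z(τ(x)) φ(x) μ(dx) = ∫_A G(r) dr. (Equivalently, 𝔼[z(τ)φ | g = r]·ρ(r) = G(r) for every r < 0, where ρ is the density of μ∘g⁻¹.) -/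

import Mathlib

open MeasureTheory Filter

noncomputable section

/-- `E = C([0,1])` with the supremum norm. -/
abbrev E : Type := C(Set.Icc (0:ℝ) 1, ℝ)

/-- `φ ∈ C¹_b(X)`: `φ` is continuously Fréchet differentiable, bounded, with bounded
derivative. -/
def IsC1b {X : Type*} [NormedAddCommGroup X] [NormedSpace ℝ X] (φ : X → ℝ) : Prop :=
  ContDiff ℝ 1 φ ∧ (∃ C, ∀ x, |φ x| ≤ C) ∧ (∃ C, ∀ x, ‖fderiv ℝ φ x‖ ≤ C)

instance : MeasurableSpace E := borel E
instance : BorelSpace E := ⟨rfl⟩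

/-- `g(x) = min_{t ∈ [0,1]} x(t)`. -/
def g : E → ℝ := fun x => ⨅ t : Set.Icc (0:ℝ) 1, x t

/-- The piecewise linear cut-off `θ_{r,ε}`. -/
def theta (r ε ξ : ℝ) : ℝ :=
  if ξ < r - ε then 0 else if ξ ≤ r + ε then (ξ - r + ε) / (2 * ε) else 1

/-!
Write `F = Dφ(·)z − wφ` and `G(r) = −∫_{g ≥ r} F dμ`. For `a < b < 0`, choosing `r = (a+b)/2`,
`ε = (b−a)/2` in (iii) and exchanging the order of integration gives
`∫_{(a,b]} G = −∫ |(a, min(b, g))| F dμ = −2ε ∫ θ_{r,ε}(g) F dμ = ∫_{a < g ≤ b} z(τ) φ dμ`,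
since `2ε θ_{r,ε}(ξ)` is the length of `(a, min(b, ξ)]` and the level sets of `g` are `μ`-null.
As `μ ∘ g⁻¹` is absolutely continuous, the image of `z(τ) φ μ` under `g` has an integrable
density `ρ`; then `ρ − G` integrates to zero over every interval in `(−∞, 0)`, so it vanishes
a.e. there by the Lebesgue differentiation theorem. Continuity of `G` is dominated convergence,
again because the level sets of `g` are null.
-/

open Set Metric Topology

theorem continuous_g : Continuous g := by
  have := isCompact_univ.continuous_sInf (f := fun (x : E) (t : Icc (0:ℝ) 1) => x t)
    continuous_eval
  simp only [image_univ] at this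
  exact this

section LevelSets

variable {α : Type*} [MeasurableSpace α] {μ : Measure α} {f : α → ℝ} {F : α → ℝ}

theorem continuous_setIntegral_le_of_measure_preimage_singleton_eq_zero (hf : Measurable f)
    (hF : Integrable F μ) (hnull : ∀ r, μ (f ⁻¹' {r}) = 0) :
    Continuous fun r => ∫ x in {x | r ≤ f x}, F x ∂μ := by
  have hmeas (r : ℝ) : MeasurableSet {x | r ≤ f x} := measurableSet_le measurable_const hf
  simp_rw [← integral_indicator (hmeas _)]
  refine continuous_iff_continuousAt.2 fun r₀ => ?_
  refine tendsto_integral_filter_of_dominated_convergence (fun x => ‖F x‖)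
    (.of_forall fun r => hF.aestronglyMeasurable.indicator (hmeas r))
    (.of_forall fun r => .of_forall fun x => norm_indicator_le_norm_self F x) hF.norm ?_
  have hne : ∀ᵐ x ∂μ, f x ≠ r₀ := measure_eq_zero_iff_ae_notMem.1 (hnull r₀)
  filter_upwards [hne] with x hx
  have hloc : ∀ᶠ r in 𝓝 r₀, (r ≤ f x ↔ r₀ ≤ f x) := by
    rcases hx.lt_or_gt with h | h
    · filter_upwards [eventually_gt_nhds h] with r hr
      exact iff_of_false hr.not_ge h.not_ge
    · filter_upwards [eventually_lt_nhds h] with r hr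
      exact iff_of_true hr.le h.le
  exact tendsto_const_nhds.congr' <| hloc.mono fun r hr => by simp [indicator, hr]

theorem integral_Ioc_setIntegral_le [SFinite μ] (hf : Measurable f) (hF : Integrable F μ)
    (a b : ℝ) :
    ∫ r in Ioc a b, ∫ x in {x | r ≤ f x}, F x ∂μ
      = ∫ x, volume.real (Ioc a (min b (f x))) * F x ∂μ := by
  set S : Set (ℝ × α) := {p | p.1 ≤ f p.2}
  have hS : MeasurableSet S := measurableSet_le measurable_fst (hf.comp measurable_snd)
  have hint : Integrable (S.indicator fun p => F p.2) ((volume.restrict (Ioc a b)).prod μ) :=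
    (hF.comp_snd _).indicator hS
  calc ∫ r in Ioc a b, ∫ x in {x | r ≤ f x}, F x ∂μ
      = ∫ r in Ioc a b, ∫ x, S.indicator (fun p => F p.2) (r, x) ∂μ := by
        simp_rw [← integral_indicator (measurableSet_le measurable_const hf)]
        rfl
    _ = ∫ x, (∫ r in Ioc a b, S.indicator (fun p => F p.2) (r, x)) ∂μ :=
        integral_integral_swap hint
    _ = ∫ x, volume.real (Ioc a (min b (f x))) * F x ∂μ := by
        congr 1 with x
        change ∫ r in Ioc a b, (Iic (f x)).indicator (fun _ => F x) r = _
        rw [setIntegral_indicator measurableSet_Iic, setIntegral_const, Ioc_inter_Iic,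
          smul_eq_mul]

end LevelSets

theorem volume_real_Ioc_min_eq_mul_theta (r c : ℝ) {ε : ℝ} (hε : 0 < ε) :
    volume.real (Ioc (r - ε) (min (r + ε) c)) = 2 * ε * theta r ε c := by
  rw [Real.volume_real_Ioc, theta]
  split_ifs with h₁ h₂
  · rw [min_eq_right (by linarith), max_eq_right (by linarith)]
    ring
  · rw [min_eq_right h₂, max_eq_left (by linarith)]
    field_simp
    ring
  · rw [min_eq_left (by linarith), max_eq_left (by linarith)]
    ring

theorem ae_eq_zero_of_forall_setIntegral_Ioc_eq_zero {f : ℝ → ℝ} (hf : LocallyIntegrable f)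
    {c : ℝ} (h : ∀ a b, a < b → b < c → ∫ x in Ioc a b, f x = 0) :
    ∀ᵐ s, s < c → f s = 0 := by
  filter_upwards [(Besicovitch.vitaliFamily (volume : Measure ℝ)).ae_tendsto_average hf]
    with s hs hsc
  have hlim := hs.comp (Besicovitch.tendsto_filterAt volume s)
  have hzero : (fun ε => ⨍ y in closedBall s ε, f y) =ᶠ[𝓝[>] 0] fun _ => 0 := by
    filter_upwards [Ioo_mem_nhdsGT (sub_pos.2 hsc)] with ε ⟨hε, hεc⟩
    rw [setAverage_eq, Real.closedBall_eq_Icc, integral_Icc_eq_integral_Ioc,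
      h _ _ (by linarith) (by linarith), smul_zero]
  exact tendsto_nhds_unique hlim (tendsto_const_nhds.congr' hzero.symm)

theorem setIntegral_eq_of_forall_setIntegral_Ioc_eq {ρ G : ℝ → ℝ} (hρ : LocallyIntegrable ρ)
    (hG : LocallyIntegrable G) {c : ℝ}
    (h : ∀ a b, a < b → b < c → ∫ x in Ioc a b, ρ x = ∫ x in Ioc a b, G x)
    {A : Set ℝ} (hA : MeasurableSet A) (hAc : A ⊆ Iio c) :
    ∫ x in A, ρ x = ∫ x in A, G x := by
  have hIoc {f : ℝ → ℝ} (hf : LocallyIntegrable f) (a b : ℝ) : IntegrableOn f (Ioc a b) :=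
    (hf.integrableOn_isCompact isCompact_Icc).mono_set Ioc_subset_Icc_self
  have hae : ∀ᵐ s, s < c → (ρ - G) s = 0 :=
    ae_eq_zero_of_forall_setIntegral_Ioc_eq_zero (hρ.sub hG) fun a b hab hbc => by
      rw [Pi.sub_def, integral_sub (hIoc hρ a b) (hIoc hG a b), h a b hab hbc, sub_self]
  refine setIntegral_congr_ae hA ?_
  filter_upwards [hae] with s hs hsA
  exact sub_eq_zero.1 (hs (hAc hsA))

theorem exists_integrable_setIntegral_preimage_eq {α β : Type*} [MeasurableSpace α]
    [MeasurableSpace β] {μ : Measure α} {ν : Measure β} [SigmaFinite ν] {f : α → β}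
    (hf : Measurable f) (hμν : μ.map f ≪ ν) {H : α → ℝ} (hH : Integrable H μ) :
    ∃ ρ : β → ℝ, Integrable ρ ν ∧
      ∀ A, MeasurableSet A → ∫ x in f ⁻¹' A, H x ∂μ = ∫ y in A, ρ y ∂ν := by
  set mPos := (μ.withDensity fun x => ENNReal.ofReal (H x)).map f
  set mNeg := (μ.withDensity fun x => ENNReal.ofReal (-H x)).map f
  have : IsFiniteMeasure (μ.withDensity fun x => ENNReal.ofReal (H x)) :=
    isFiniteMeasure_withDensity_ofReal hH.hasFiniteIntegral
  have : IsFiniteMeasure (μ.withDensity fun x => ENNReal.ofReal (-H x)) :=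
    isFiniteMeasure_withDensity_ofReal hH.neg.hasFiniteIntegral
  have hac (h : α → ENNReal) : (μ.withDensity h).map f ≪ ν :=
    ((withDensity_absolutelyContinuous μ h).map hf).trans hμν
  refine ⟨fun y => (mPos.rnDeriv ν y).toReal - (mNeg.rnDeriv ν y).toReal,
    Measure.integrable_toReal_rnDeriv.sub Measure.integrable_toReal_rnDeriv, fun A hA => ?_⟩
  rw [integral_sub Measure.integrable_toReal_rnDeriv.integrableOn
      Measure.integrable_toReal_rnDeriv.integrableOn,
    Measure.setIntegral_toReal_rnDeriv' (hac _) hA, Measure.setIntegral_toReal_rnDeriv' (hac _) hA,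
    measureReal_def, measureReal_def, Measure.map_apply hf hA, Measure.map_apply hf hA,
    withDensity_apply _ (hf hA), withDensity_apply _ (hf hA),
    integral_eq_lintegral_pos_part_sub_lintegral_neg_part hH.integrableOn]

section C1b

variable {X : Type*} [NormedAddCommGroup X] [NormedSpace ℝ X] [MeasurableSpace X]
  [OpensMeasurableSpace X] {μ : Measure X} {φ : X → ℝ}

theorem IsC1b.integrable_fderiv_apply [IsFiniteMeasure μ] (hφ : IsC1b φ) (v : X) :
    Integrable (fun x => fderiv ℝ φ x v) μ := by
  obtain ⟨C, hC⟩ := hφ.2.2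
  refine .of_bound ((hφ.1.continuous_fderiv one_ne_zero).clm_apply continuous_const
    ).aestronglyMeasurable (C * ‖v‖) (.of_forall fun x => ?_)
  exact (fderiv ℝ φ x).le_of_opNorm_le (hC x) v

theorem IsC1b.integrable_mul {ψ : X → ℝ} (hφ : IsC1b φ) (hψ : Integrable ψ μ) :
    Integrable (fun x => ψ x * φ x) μ := by
  obtain ⟨C, hC⟩ := hφ.2.1
  simpa only [mul_comm] using hψ.bdd_mul hφ.1.continuous.aestronglyMeasurable (c := C)
    (.of_forall fun x => (Real.norm_eq_abs _).trans_le (hC x))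

end C1b

theorem setIntegral_preimage_Ioc_eq_of_theta_identity {α : Type*} [MeasurableSpace α]
    {μ : Measure α} [SFinite μ] {f : α → ℝ} (hf : Measurable f)
    (hnull : ∀ r, μ (f ⁻¹' {r}) = 0) {F H : α → ℝ} (hF : Integrable F μ) {c : ℝ}
    (hθ : ∀ ε, 0 < ε → ∀ r, r + ε < c →
      (1 / (2 * ε)) * ∫ x in {x | r - ε ≤ f x ∧ f x ≤ r + ε}, H x ∂μ
        = - ∫ x, theta r ε (f x) * F x ∂μ)
    {a b : ℝ} (hab : a < b) (hbc : b < c) :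
    ∫ x in f ⁻¹' Ioc a b, H x ∂μ = ∫ r in Ioc a b, - ∫ x in {x | r ≤ f x}, F x ∂μ := by
  obtain ⟨r, ε, hε, rfl, rfl⟩ : ∃ r ε, 0 < ε ∧ a = r - ε ∧ b = r + ε :=
    ⟨(a + b) / 2, (b - a) / 2, by linarith, by ring, by ring⟩
  have hstrip : f ⁻¹' Ioc (r - ε) (r + ε) =ᵐ[μ] {x | r - ε ≤ f x ∧ f x ≤ r + ε} := by
    refine ae_eq_comp hf.aemeasurable (Ioc_ae_eq_Icc' ?_)
    rw [Measure.map_apply hf (measurableSet_singleton _)]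
    exact hnull _
  calc ∫ x in f ⁻¹' Ioc (r - ε) (r + ε), H x ∂μ
      = 2 * ε * ((1 / (2 * ε)) * ∫ x in {x | r - ε ≤ f x ∧ f x ≤ r + ε}, H x ∂μ) := by
        rw [setIntegral_congr_set hstrip]
        field_simp
    _ = - ∫ x, volume.real (Ioc (r - ε) (min (r + ε) (f x))) * F x ∂μ := by
        simp_rw [hθ ε hε r hbc, volume_real_Ioc_min_eq_mul_theta _ _ hε, mul_assoc,
          integral_const_mul]
        ring
    _ = ∫ r' in Ioc (r - ε) (r + ε), - ∫ x in {x | r' ≤ f x}, F x ∂μ := by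
        rw [integral_neg, integral_Ioc_setIntegral_le hf hF]

theorem surface_density_of_min_functional_general
    (μ : Measure E) [IsProbabilityMeasure μ] (z : E) (w : E → ℝ)
    (hw : Integrable w μ)
    (habs : μ.map g ≪ (volume : Measure ℝ))
    (τ : E → Set.Icc (0:ℝ) 1) (hτmeas : Measurable τ)
    (hkey : ∀ φ : E → ℝ, IsC1b φ → ∀ ε : ℝ, 0 < ε → ∀ r : ℝ, r + ε < 0 →
      (1 / (2 * ε)) * ∫ x in {x | r - ε ≤ g x ∧ g x ≤ r + ε}, z (τ x) * φ x ∂μ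
        = - ∫ x, theta r ε (g x) * (fderiv ℝ φ x z - w x * φ x) ∂μ)
    (φ : E → ℝ) (hφ : IsC1b φ) :
    ContinuousOn
      (fun r : ℝ => - ∫ x in {x | r ≤ g x}, (fderiv ℝ φ x z - w x * φ x) ∂μ)
      (Set.Iio 0) ∧
    ∀ A : Set ℝ, MeasurableSet A → A ⊆ Set.Iio 0 →
      ∫ x, A.indicator (fun _ => (1:ℝ)) (g x) * (z (τ x) * φ x) ∂μ
        = ∫ r in A, - ∫ x in {x | r ≤ g x}, (fderiv ℝ φ x z - w x * φ x) ∂μ := by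
  have hgm : Measurable g := continuous_g.measurable
  have hnull (r : ℝ) : μ (g ⁻¹' {r}) = 0 := by
    rw [← Measure.map_apply hgm (measurableSet_singleton r)]
    exact habs Real.volume_singleton
  have hF : Integrable (fun x => fderiv ℝ φ x z - w x * φ x) μ :=
    (hφ.integrable_fderiv_apply z).sub (hφ.integrable_mul hw)
  have hH : Integrable (fun x => z (τ x) * φ x) μ :=
    hφ.integrable_mul <| .of_bound
      ((map_continuous z).measurable.comp hτmeas).aestronglyMeasurable ‖z‖
      (.of_forall fun x => z.norm_coe_le_norm (τ x))
  have hG := (continuous_setIntegral_le_of_measure_preimage_singleton_eq_zero hgm hF hnull).neg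
  refine ⟨hG.continuousOn, fun A hA hA0 => ?_⟩
  obtain ⟨ρ, hρ, hρA⟩ := exists_integrable_setIntegral_preimage_eq hgm habs hH
  calc ∫ x, A.indicator (fun _ => (1:ℝ)) (g x) * (z (τ x) * φ x) ∂μ
      = ∫ x in g ⁻¹' A, z (τ x) * φ x ∂μ := by
        rw [← integral_indicator (hgm hA)]
        congr 1 with x
        by_cases hx : g x ∈ A <;> simp [hx]
    _ = ∫ r in A, ρ r := hρA A hA
    _ = _ := setIntegral_eq_of_forall_setIntegral_Ioc_eq hρ.locallyIntegrable
        hG.locallyIntegrable (fun a b hab hb => (hρA _ measurableSet_Ioc).symm.trans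
          (setIntegral_preimage_Ioc_eq_of_theta_identity hgm hnull hF (hkey φ hφ) hab hb)) hA hA0

/-- Under an integration-by-parts weight, absolute continuity of the law of
`g`, a.e. uniqueness of the minimizer, and the approximate identity (iii), the function
`G(r) = −∫_{g ≥ r} (Dφ·z − wφ) dμ` is continuous on `(−∞,0)` and is a density (w.r.t.
Lebesgue measure on `(−∞,0)`) for the pushforward under `g` of the measure `z(τ(·))φ·μ`. -/
theorem surface_density_of_min_functional
    (μ : Measure E) [IsProbabilityMeasure μ] (z : E) (w : E → ℝ)
    (hw : Integrable w μ)
    (hweight : ∀ φ : E → ℝ, IsC1b φ → ∫ x, fderiv ℝ φ x z ∂μ = ∫ x, φ x * w x ∂μ)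
    (habs : μ.map g ≪ (volume : Measure ℝ))
    (huniq : ∀ᵐ x ∂μ, ∃! t : Set.Icc (0:ℝ) 1, x t = g x)
    (τ : E → Set.Icc (0:ℝ) 1) (hτmeas : Measurable τ)
    (hτ : ∀ᵐ x ∂μ, x (τ x) = g x)
    (hkey : ∀ φ : E → ℝ, IsC1b φ → ∀ ε : ℝ, 0 < ε → ∀ r : ℝ, r + ε < 0 →
      (1 / (2 * ε)) * ∫ x in {x | r - ε ≤ g x ∧ g x ≤ r + ε}, z (τ x) * φ x ∂μ
        = - ∫ x, theta r ε (g x) * (fderiv ℝ φ x z - w x * φ x) ∂μ)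
    (φ : E → ℝ) (hφ : IsC1b φ) :
    ContinuousOn
      (fun r : ℝ => - ∫ x in {x | r ≤ g x}, (fderiv ℝ φ x z - w x * φ x) ∂μ)
      (Set.Iio 0) ∧
    ∀ A : Set ℝ, MeasurableSet A → A ⊆ Set.Iio 0 →
      ∫ x, A.indicator (fun _ => (1:ℝ)) (g x) * (z (τ x) * φ x) ∂μ
        = ∫ r in A, - ∫ x in {x | r ≤ g x}, (fderiv ℝ φ x z - w x * φ x) ∂μ :=
  surface_density_of_min_functional_general μ z w hw habs τ hτmeas hkey φ hφ
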